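/- For positive integers r, n and p with Re(p) sufficiently large, and |t| < 1, the Dirichlet series Σ_{k≥1} M_r(t;n,k)/k^{rp} equals (Li_{rp+r}(t)/ζ(rp+r))·σ_{−p}(n,r), where σ_p(n,r) := Σ_{d : d^r | n} d^{rp}. -/

import Mathlib

/-!
Expanding the `r`-coprimality condition in `c_r(n, k)` by Möbius inversion over the divisors
`d ∣ k` with `d ^ r ∣ m`, and evaluating the resulting complete exponential sums, gives
`c_r(n, k) = ∑_{d ∣ k} μ(d) w(k / d)` with `w(e) = e ^ r` if `e ^ r ∣ n` and `w(e) = 0` otherwise.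
Hence `k ^ r M_r(t; n, k)` is the Dirichlet convolution `μ ⋆ w ⋆ t^(·)`, and at `s = r p + r`
(where all three Dirichlet series converge absolutely) the series factors as
`L(μ, s) L(w, s) L(t^(·), s) = ζ(s)⁻¹ · σ_{-p}(n, r) · Li_s(t)`.
-/

open Finset

/-- Cohen's `r`-Ramanujan sum. -/
noncomputable def ramcr (r n k : ℕ) : ℂ :=
  ∑ m ∈ (Finset.Icc 1 (k ^ r)).filter
      (fun m => ∀ d ∈ Finset.Icc 2 (k ^ r), ¬(d ^ r ∣ m ∧ d ^ r ∣ k ^ r)),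
    Complex.exp (2 * Real.pi * Complex.I * m * n / (k ^ r))

/-- `M_r(t;n,k) = (1/k^r) Σ_{d|k} c_r(n,k/d) t^d`. -/
noncomputable def neckr (r : ℕ) (t : ℂ) (n k : ℕ) : ℂ :=
  (1 / (k : ℂ) ^ r) * ∑ d ∈ k.divisors, ramcr r n (k / d) * t ^ d

open Complex ArithmeticFunction
open scoped ArithmeticFunction.Moebius LSeries.notation Real

lemma sum_Icc_exp_two_pi_I_mul_div (K n : ℕ) (hK : K ≠ 0) :
    ∑ m ∈ Icc 1 K, exp (2 * π * I * m * n / K) = if K ∣ n then (K : ℂ) else 0 := by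
  set z := exp (2 * π * I * n / K)
  have hpow (m : ℕ) : exp (2 * π * I * m * n / K) = z ^ m := by
    rw [← exp_nat_mul]; ring_nf
  have hzK : z ^ K = 1 := by
    rw [← hpow, mul_assoc, ← Nat.cast_mul, exp_two_pi_mul_I_mul_div_eq_one_iff hK]
    exact dvd_mul_right K n
  have hIcc : ∑ m ∈ Icc 1 K, z ^ m = z * ∑ m ∈ range K, z ^ m := by
    rw [← Finset.Ico_add_one_right_eq_Icc, Finset.sum_Ico_eq_sum_range, mul_sum]
    simp [pow_succ', add_comm]
  have hz : z = 1 ↔ K ∣ n := exp_two_pi_mul_I_mul_div_eq_one_iff hK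
  simp_rw [hpow, hIcc]
  split_ifs with h
  · simp [hz.2 h]
  · rw [geom_sum_eq (mt hz.1 h), hzK, sub_self, zero_div, mul_zero]

lemma pow_lcm_id_dvd {r m : ℕ} {S : Finset ℕ} (h : ∀ d ∈ S, d ^ r ∣ m) :
    S.lcm id ^ r ∣ m := by
  induction S using Finset.induction with
  | empty => simp
  | insert a S _ ih =>
    rw [lcm_insert, lcm_eq_nat_lcm, ← Nat.pow_lcm_pow]
    exact Nat.lcm_dvd (h a (mem_insert_self a S)) (ih fun d hd => h d (mem_insert_of_mem hd))

lemma sum_divisors_moebius {R : Type*} [Ring R] (D : ℕ) :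
    ∑ d ∈ D.divisors, (μ d : R) = if D = 1 then 1 else 0 := by
  have := congr($(coe_moebius_mul_coe_zeta (R := R)) D)
  rwa [coe_mul_zeta_apply, one_apply] at this

lemma sum_moebius_divisors_filter_pow_dvd {R : Type*} [Ring R] {r k m : ℕ} (hk : k ≠ 0) :
    ∑ d ∈ k.divisors with d ^ r ∣ m, (μ d : R)
      = if ∀ d ∈ k.divisors, d ^ r ∣ m → d = 1 then 1 else 0 := by
  set D := {d ∈ k.divisors | d ^ r ∣ m}.lcm id
  have hDk : D ∣ k := Finset.lcm_dvd fun d hd => Nat.dvd_of_mem_divisors (mem_filter.1 hd).1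
  have hDm : D ^ r ∣ m := pow_lcm_id_dvd fun d hd => (mem_filter.1 hd).2
  have hD : D ≠ 0 := ne_zero_of_dvd_ne_zero hk hDk
  -- the divisors `d ∣ k` with `d ^ r ∣ m` are closed under `lcm`, so they are the divisors of `D`
  have hdivisors : {d ∈ k.divisors | d ^ r ∣ m} = D.divisors := by
    ext d
    refine ⟨fun hd => Nat.mem_divisors.2 ⟨Finset.dvd_lcm (f := id) hd, hD⟩, fun hd => ?_⟩
    have hdD := Nat.dvd_of_mem_divisors hd
    exact mem_filter.2
      ⟨Nat.mem_divisors.2 ⟨hdD.trans hDk, hk⟩, (pow_dvd_pow_of_dvd hdD r).trans hDm⟩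
  rw [hdivisors, sum_divisors_moebius]
  refine if_congr ⟨fun hD1 d hdk hdm => ?_, fun h => h D (Nat.mem_divisors.2 ⟨hDk, hk⟩) hDm⟩
    rfl rfl
  have : d ∈ D.divisors := hdivisors ▸ mem_filter.2 ⟨hdk, hdm⟩
  simpa [hD1] using this

lemma sum_Icc_filter_dvd {M : Type*} [AddCommMonoid M] (F : ℕ → M) {a : ℕ} (ha : a ≠ 0)
    (b : ℕ) : ∑ m ∈ Icc 1 (a * b) with a ∣ m, F m = ∑ m ∈ Icc 1 b, F (a * m) := by
  have hmul : {m ∈ Icc 1 (a * b) | a ∣ m} = (Icc 1 b).image (a * ·) := by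
    ext m
    simp only [mem_filter, mem_Icc, mem_image]
    constructor
    · rintro ⟨⟨h1, h2⟩, c, rfl⟩
      exact ⟨c, ⟨Nat.pos_of_ne_zero (by rintro rfl; omega), Nat.le_of_mul_le_mul_left h2
        (Nat.pos_of_ne_zero ha)⟩, rfl⟩
    · rintro ⟨c, ⟨h1, h2⟩, rfl⟩
      exact ⟨⟨Nat.mul_pos (Nat.pos_of_ne_zero ha) h1, Nat.mul_le_mul_left a h2⟩, dvd_mul_right a c⟩
  rw [hmul, sum_image fun x _ y _ h => Nat.eq_of_mul_eq_mul_left (Nat.pos_of_ne_zero ha) h]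

def powDvdWeight (r n e : ℕ) : ℂ := if e ^ r ∣ n then (e : ℂ) ^ r else 0

lemma ramcr_eq_sum_moebius {r n k : ℕ} (hr : r ≠ 0) (hk : k ≠ 0) :
    ramcr r n k = ∑ d ∈ k.divisors, (μ d : ℂ) * powDvdWeight r n (k / d) := by
  set e : ℕ → ℂ := fun m => exp (2 * π * I * m * n / (k : ℂ) ^ r)
  have hcoprime (m : ℕ) : (∀ d ∈ Icc 2 (k ^ r), ¬(d ^ r ∣ m ∧ d ^ r ∣ k ^ r)) ↔
      ∀ d ∈ k.divisors, d ^ r ∣ m → d = 1 := by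
    simp only [mem_Icc, Nat.mem_divisors, Nat.pow_dvd_pow_iff hr, not_and]
    refine ⟨fun h d ⟨hdk, _⟩ hdm => ?_, fun h d ⟨hd2, _⟩ hdm hdk => ?_⟩
    · have hd0 := Nat.pos_of_dvd_of_pos hdk (Nat.pos_of_ne_zero hk)
      have hdle := (Nat.le_of_dvd (Nat.pos_of_ne_zero hk) hdk).trans (Nat.le_self_pow hr k)
      by_contra hd1
      exact h d ⟨by omega, hdle⟩ hdm hdk
    · exact absurd (h d ⟨hdk, hk⟩ hdm) (by omega)
  calc ramcr r n k
      = ∑ m ∈ Icc 1 (k ^ r), ∑ d ∈ k.divisors with d ^ r ∣ m, (μ d : ℂ) * e m := by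
        simp_rw [ramcr, ← sum_mul, sum_moebius_divisors_filter_pow_dvd hk, ← hcoprime,
          sum_filter, ite_mul, one_mul, zero_mul]
        rfl
    _ = ∑ d ∈ k.divisors, (μ d : ℂ) * ∑ m ∈ Icc 1 (k ^ r) with d ^ r ∣ m, e m := by
        simp_rw [sum_filter, mul_sum]
        rw [sum_comm]
        simp_rw [mul_ite, mul_zero]
    _ = _ := sum_congr rfl fun d hd => by
        obtain ⟨q, rfl⟩ := Nat.dvd_of_mem_divisors hd
        have hd0 : d ≠ 0 := left_ne_zero_of_mul hk
        have hq0 : q ≠ 0 := right_ne_zero_of_mul hk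
        rw [Nat.mul_div_cancel_left q (Nat.pos_of_ne_zero hd0), mul_pow,
          sum_Icc_filter_dvd e (pow_ne_zero r hd0)]
        congr 1
        rw [powDvdWeight, ← Nat.cast_pow, ← sum_Icc_exp_two_pi_I_mul_div _ n (pow_ne_zero r hq0)]
        refine sum_congr rfl fun m _ => congrArg exp ?_
        push_cast
        field_simp
        ring

lemma ramcr_eq_moebius_convolution {r n k : ℕ} (hr : r ≠ 0) (hk : k ≠ 0) :
    ramcr r n k = (↗μ ⍟ powDvdWeight r n) k := by
  rw [ramcr_eq_sum_moebius hr hk, LSeries.convolution_def]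
  exact (Nat.sum_divisorsAntidiagonal fun a b => (μ a : ℂ) * powDvdWeight r n b).symm

lemma LSeriesHasSum_powDvdWeight {r n : ℕ} (hr : r ≠ 0) (hn : n ≠ 0) (s : ℂ) :
    LSeriesHasSum (powDvdWeight r n) s (∑ d ∈ n.divisors with d ^ r ∣ n, (d : ℂ) ^ r / d ^ s) := by
  have hsupp : ∀ d ∉ {d ∈ n.divisors | d ^ r ∣ n}, LSeries.term (powDvdWeight r n) s d = 0 := by
    intro d hd
    rcases eq_or_ne d 0 with rfl | hd0
    · exact LSeries.term_zero _ _
    have hdn : ¬ d ^ r ∣ n := fun h =>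
      hd (mem_filter.2 ⟨Nat.mem_divisors.2 ⟨(dvd_pow_self d hr).trans h, hn⟩, h⟩)
    rw [LSeries.term_of_ne_zero hd0, powDvdWeight, if_neg hdn, zero_div]
  have h : LSeriesHasSum (powDvdWeight r n) s
      (∑ d ∈ n.divisors with d ^ r ∣ n, LSeries.term (powDvdWeight r n) s d) :=
    hasSum_sum_of_ne_finset_zero hsupp
  convert h using 1
  refine sum_congr rfl fun d hd => ?_
  have hd0 : d ≠ 0 := Nat.ne_of_gt (Nat.pos_of_mem_divisors (mem_filter.1 hd).1)
  rw [LSeries.term_of_ne_zero hd0, powDvdWeight, if_pos (mem_filter.1 hd).2]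

lemma LSeriesSummable_pow_of_norm_le_one {t s : ℂ} (ht : ‖t‖ ≤ 1) (hs : 1 < s.re) :
    LSeriesSummable (t ^ ·) s :=
  LSeriesSummable_of_bounded_of_one_lt_re (m := 1)
    (fun k _ => by simpa using pow_le_one₀ (norm_nonneg t) ht) hs

lemma LSeries_moebius_eq_inv_riemannZeta {s : ℂ} (hs : 1 < s.re) :
    L ↗μ s = (riemannZeta s)⁻¹ :=
  eq_inv_of_mul_eq_one_right (LSeries_one_eq_riemannZeta hs ▸ LSeries_one_mul_Lseries_moebius hs)

lemma LSeries_eq_tsum_succ (f : ℕ → ℂ) (s : ℂ) :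
    L f s = ∑' k : ℕ, f (k + 1) / ((k : ℂ) + 1) ^ s := by
  rw [LSeries, ← Nat.succ_injective.tsum_eq]
  · simp [LSeries.term_of_ne_zero]
  · rintro (_ | j) hk
    · exact absurd (LSeries.term_zero f s) hk
    · exact ⟨j, rfl⟩

lemma neckr_div_cpow {r n k : ℕ} (hr : r ≠ 0) (hk : k ≠ 0) (t w : ℂ) :
    neckr r t n k / (k : ℂ) ^ w = ((↗μ ⍟ powDvdWeight r n) ⍟ (t ^ ·)) k / (k : ℂ) ^ (w + r) := by
  have hkC : (k : ℂ) ≠ 0 := Nat.cast_ne_zero.2 hk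
  have hconv : ((↗μ ⍟ powDvdWeight r n) ⍟ (t ^ ·)) k
      = ∑ d ∈ k.divisors, ramcr r n (k / d) * t ^ d := by
    rw [LSeries.convolution_def]
    refine (Nat.sum_divisorsAntidiagonal' fun a b => (↗μ ⍟ powDvdWeight r n) a * t ^ b).trans ?_
    refine sum_congr rfl fun d hd => ?_
    rw [ramcr_eq_moebius_convolution hr
      (Nat.div_pos (Nat.divisor_le hd) (Nat.pos_of_mem_divisors hd)).ne']
  rw [hconv, neckr, cpow_add _ _ hkC, cpow_natCast]
  field_simp [cpow_ne_zero_iff]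

/-- `Σ_{k≥1} M_r(t;n,k)/k^{rp} = (Li_{rp+r}(t)/ζ(rp+r))·σ_{-p}(n,r)`, where
`σ_p(n,r) = Σ_{d^r | n} d^{rp}`. -/
theorem stmt15 (r n : ℕ) (hr : 0 < r) (hn : 0 < n) (p : ℂ) (hp : 1 < p.re)
    (t : ℂ) (ht : ‖t‖ < 1) :
    ∑' k : ℕ, neckr r t n (k + 1) / ((k : ℂ) + 1) ^ ((r : ℂ) * p)
      = ((∑' k : ℕ, t ^ (k + 1) / ((k : ℂ) + 1) ^ ((r : ℂ) * p + r))
            / riemannZeta ((r : ℂ) * p + r))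
        * ∑ d ∈ n.divisors.filter (fun d => d ^ r ∣ n), (d : ℂ) ^ (-((r : ℂ) * p)) := by
  set s := (r : ℂ) * p + r
  have hs : 1 < s.re := by
    have : (1 : ℝ) ≤ r := by exact_mod_cast hr
    simp only [s, add_re, mul_re, natCast_re, natCast_im, zero_mul, sub_zero]
    nlinarith
  have hμ : LSeriesSummable ↗μ s := LSeriesSummable_moebius_iff.2 hs
  have hw := LSeriesHasSum_powDvdWeight hr.ne' hn.ne' s
  have hpow : LSeriesSummable (t ^ ·) s := LSeriesSummable_pow_of_norm_le_one ht.le hs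
  have hdiv : ∀ d ∈ n.divisors.filter (· ^ r ∣ n), (d : ℂ) ^ r / d ^ s = d ^ (-((r : ℂ) * p)) := by
    intro d hd
    have hd0 : (d : ℂ) ≠ 0 := Nat.cast_ne_zero.2 (Nat.pos_of_mem_divisors (mem_filter.1 hd).1).ne'
    rw [cpow_add _ _ hd0, cpow_natCast, cpow_neg]
    field_simp
  calc ∑' k : ℕ, neckr r t n (k + 1) / ((k : ℂ) + 1) ^ ((r : ℂ) * p)
      = L ((↗μ ⍟ powDvdWeight r n) ⍟ (t ^ ·)) s := by
        rw [LSeries_eq_tsum_succ]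
        refine tsum_congr fun k => ?_
        simpa using neckr_div_cpow hr.ne' k.succ_ne_zero t ((r : ℂ) * p)
    _ = L ↗μ s * L (powDvdWeight r n) s * L (t ^ ·) s := by
        rw [LSeries_convolution' (hμ.convolution hw.LSeriesSummable) hpow,
          LSeries_convolution' hμ hw.LSeriesSummable]
    _ = _ := by
        rw [LSeries_moebius_eq_inv_riemannZeta hs, hw.LSeries_eq, LSeries_eq_tsum_succ,
          sum_congr rfl hdiv]
        ring
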